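/- arXiv:0710.5338 — 3 statements merged into one kernel-verified Lean document; each statement's English description precedes it below -/
import Mathlib

section
/- In the random fs-relation graph model, if m - n ≥ m/c for a constant c > 1, then the random variable Z = Σ_{v ∈ T} Z_v satisfies |T|/m³ ≤ E[Z] ≤ c²·|T|/m³. -/
open scoped Classical
open Finset

noncomputable section

/-- The sample space of the random fs-relation graph model with `n1` applicants of the
first category, `n2` applicants of the second category, and `m` items: an outcome
records the `f1`-, `s1`-, `f2`- and `s2`-items assigned to the applicants. -/
abbrev FSSpace (n1 n2 m : ℕ) : Type :=
  (Fin n1 → Fin m) × (Fin n1 → Fin m) × (Fin n2 → Fin m) × (Fin n2 → Fin m)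

/-- the `f1`-items of an outcome. -/
def fOne {n1 n2 m : ℕ} (ω : FSSpace n1 n2 m) : Fin n1 → Fin m := ω.1
/-- the `s1`-items of an outcome. -/
def sOne {n1 n2 m : ℕ} (ω : FSSpace n1 n2 m) : Fin n1 → Fin m := ω.2.1
/-- the `f2`-items of an outcome. -/
def fTwo {n1 n2 m : ℕ} (ω : FSSpace n1 n2 m) : Fin n2 → Fin m := ω.2.2.1
/-- the `s2`-items of an outcome. -/
def sTwo {n1 n2 m : ℕ} (ω : FSSpace n1 n2 m) : Fin n2 → Fin m := ω.2.2.2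

/-- the set `F1` of an outcome. -/
def FOne {n1 n2 m : ℕ} (ω : FSSpace n1 n2 m) : Finset (Fin m) := Finset.univ.image (fOne ω)
/-- the set `F2` of an outcome. -/
def FTwo {n1 n2 m : ℕ} (ω : FSSpace n1 n2 m) : Finset (Fin m) := Finset.univ.image (fTwo ω)

/-- an outcome is valid if each `s1`- and `f2`-item avoids `F1` and each `s2`-item
avoids `F1 ∪ F2`, as in the sequential random process. -/
def FSValid {n1 n2 m : ℕ} (ω : FSSpace n1 n2 m) : Prop :=
  (∀ x, sOne ω x ∉ FOne ω) ∧ (∀ y, fTwo ω y ∉ FOne ω) ∧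
    (∀ y, sTwo ω y ∉ FOne ω ∪ FTwo ω)

/-- the probability of a single outcome under the sequential random process:
the `f1`-items are independent and uniform on the `m` items, then the `s1`- and
`f2`-items are independent and uniform on the items outside `F1`, then the
`s2`-items are independent and uniform on the items outside `F1 ∪ F2`. -/
def fsWeight (n1 n2 m : ℕ) (ω : FSSpace n1 n2 m) : ℝ :=
  if FSValid ω then
    (1 / (m : ℝ)) ^ n1 * (1 / ((m : ℝ) - (FOne ω).card)) ^ (n1 + n2) *
      (1 / ((m : ℝ) - ((FOne ω) ∪ (FTwo ω)).card)) ^ n2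
  else 0

/-- the probability of an event in the random fs-relation graph model. -/
def fsProb (n1 n2 m : ℕ) (S : FSSpace n1 n2 m → Prop) : ℝ :=
  ∑ ω : FSSpace n1 n2 m, if S ω then fsWeight n1 n2 m ω else 0

/-- the expectation of a random variable in the random fs-relation graph model. -/
def fsExp (n1 n2 m : ℕ) (f : FSSpace n1 n2 m → ℝ) : ℝ :=
  ∑ ω : FSSpace n1 n2 m, fsWeight n1 n2 m ω * f ω

/-- the index set `T` of tuples `(x1, x2, y1, y2)` with `x1 < x2` and `y1 ≠ y2`. -/
def Ttup (n1 n2 : ℕ) : Finset (Fin n1 × Fin n1 × Fin n2 × Fin n2) :=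
  Finset.univ.filter fun v => v.1 < v.2.1 ∧ v.2.2.1 ≠ v.2.2.2

/-- the event `{Z_v = 1}`, i.e. `f1(x1) = f1(x2)`, `f2(y1) = s1(x1)`, `f2(y2) = s1(x2)`. -/
def ZEvent {n1 n2 m : ℕ} (v : Fin n1 × Fin n1 × Fin n2 × Fin n2)
    (ω : FSSpace n1 n2 m) : Prop :=
  fOne ω v.1 = fOne ω v.2.1 ∧ fTwo ω v.2.2.1 = sOne ω v.1 ∧
    fTwo ω v.2.2.2 = sOne ω v.2.1

/-- the indicator random variable `Z_v`. -/
def Zind {n1 n2 m : ℕ} (v : Fin n1 × Fin n1 × Fin n2 × Fin n2)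
    (ω : FSSpace n1 n2 m) : ℝ :=
  if ZEvent v ω then 1 else 0

/-- the random variable `Z = ∑_{v ∈ T} Z_v`. -/
def Ztotal (n1 n2 m : ℕ) (ω : FSSpace n1 n2 m) : ℝ :=
  ∑ v ∈ Ttup n1 n2, Zind v ω

/-- `T_h(v)`: the tuples `w ∈ T \ {v}` that are `h`-common to `v`,
i.e. `|{x1, x2} ∩ {x1', x2'}| = h`. -/
def Tcommon (n1 n2 : ℕ) (h : ℕ) (v : Fin n1 × Fin n1 × Fin n2 × Fin n2) :
    Finset (Fin n1 × Fin n1 × Fin n2 × Fin n2) :=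
  (Ttup n1 n2).filter fun w =>
    w ≠ v ∧ (({v.1, v.2.1} : Finset (Fin n1)) ∩ ({w.1, w.2.1} : Finset (Fin n1))).card = h

/-- the edge of applicant `a` (first or second category) joins items `p` and `q`
in the fs-relation graph of the outcome `ω`. -/
def fsJoins {n1 n2 m : ℕ} (ω : FSSpace n1 n2 m) (a : Fin n1 ⊕ Fin n2)
    (p q : Fin m) : Prop :=
  Sum.elim (fun x => (fOne ω x = p ∧ sOne ω x = q) ∨ (fOne ω x = q ∧ sOne ω x = p))
    (fun y => (fTwo ω y = p ∧ sTwo ω y = q) ∨ (fTwo ω y = q ∧ sTwo ω y = p)) a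

/-- the fs-relation graph of the outcome contains a cycle: a closed walk on `ℓ ≥ 2`
distinct vertices using `ℓ` distinct edges. -/
def fsHasCycle {n1 n2 m : ℕ} (ω : FSSpace n1 n2 m) : Prop :=
  ∃ (ℓ : ℕ) (u : ℕ → Fin m) (c : ℕ → Fin n1 ⊕ Fin n2),
    2 ≤ ℓ ∧
    (∀ i j, i < ℓ → j < ℓ → u i = u j → i = j) ∧
    (∀ i j, i < ℓ → j < ℓ → c i = c j → i = j) ∧
    (∀ i, i < ℓ → fsJoins ω (c i) (u i) (u ((i + 1) % ℓ)))

/-- the fs-relation graph of the outcome contains a simple path with `ℓ ≥ 4`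
distinct edges and `ℓ + 1` distinct vertices. -/
def fsHasLongPath {n1 n2 m : ℕ} (ω : FSSpace n1 n2 m) : Prop :=
  ∃ (ℓ : ℕ) (v : ℕ → Fin m) (e : ℕ → Fin n1 ⊕ Fin n2),
    4 ≤ ℓ ∧
    (∀ i j, i ≤ ℓ → j ≤ ℓ → v i = v j → i = j) ∧
    (∀ i j, i < ℓ → j < ℓ → e i = e j → i = j) ∧
    (∀ i, i < ℓ → fsJoins ω (e i) (v i) (v (i + 1)))

/-!
By linearity `E[Z]` is the sum over `v ∈ T` of `P(Z_v = 1)`. Given `f1`, the `s2`-, `f2`- and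
`s1`-items are uniform on the complements of the items already used, so summing them out in
this order leaves `P(Z_v = 1) = ∑_{f1(x1) = f1(x2)} m^{-n1} (m - |F1|)^{-2}`: only the two
constraints `f2(yi) = s1(xi)` cost a factor `1/(m - |F1|)` each. As `|F1| ≤ n`, that factor
lies between `1/m` and `c/m`, and the event `f1(x1) = f1(x2)` has probability `1/m`.
-/

section FunctionCounting

variable {ι α : Type*} [Fintype ι] [DecidableEq ι] [Fintype α] [DecidableEq α]

lemma card_filter_forall_notMem (U : Finset α) :
    #{g : ι → α | ∀ x, g x ∉ U} = (Fintype.card α - #U) ^ Fintype.card ι := by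
  have : ({g : ι → α | ∀ x, g x ∉ U} : Finset (ι → α)) = Fintype.piFinset fun _ => Uᶜ := by
    ext g; simp [Fintype.mem_piFinset]
  rw [this, Fintype.card_piFinset, prod_const, card_compl, card_univ]

lemma card_filter_forall_notMem_apply_eq_apply_eq {i j : ι} (hij : i ≠ j) {U : Finset α}
    {a b : α} (ha : a ∉ U) (hb : b ∉ U) :
    #{g : ι → α | (∀ x, g x ∉ U) ∧ g i = a ∧ g j = b} =
      (Fintype.card α - #U) ^ (Fintype.card ι - 2) := by
  set s : ι → Finset α := fun _ => Uᶜ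
  have hfilter : ({g : ι → α | (∀ x, g x ∉ U) ∧ g i = a ∧ g j = b} : Finset (ι → α)) =
      {g ∈ Fintype.piFinset (Function.update s i {a}) | g j = b} := by
    rw [Fintype.piFinset_update_singleton_eq_filter_piFinset_eq s i (mem_compl.2 ha),
      filter_filter]
    ext g; simp [s, Fintype.mem_piFinset]
  have hb' : b ∈ Function.update s i {a} j := by
    simpa [Function.update_of_ne hij.symm, s] using hb
  rw [hfilter, Fintype.card_filter_piFinset_eq_of_mem _ _ hb']
  have hupd : ∀ x, #(Function.update s i {a} x) = Function.update (fun _ => #Uᶜ) i 1 x := by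
    intro x; rcases eq_or_ne x i with rfl | hx <;> simp [*, s]
  simp only [hupd]
  rw [prod_update_of_mem (mem_erase.2 ⟨hij, mem_univ i⟩), one_mul, prod_const, card_compl,
    card_sdiff, card_erase_of_mem (mem_univ j)]
  simp [hij, Nat.sub_sub]

lemma card_filter_apply_eq_apply {i j : ι} (hij : i ≠ j) :
    #{g : ι → α | g i = g j} = Fintype.card α ^ (Fintype.card ι - 1) := by
  have h2 : 2 ≤ Fintype.card ι := (card_pair hij).symm.trans_le (card_le_univ _)
  have hfiber : ∀ a : α, #{g ∈ ({g | g i = g j} : Finset (ι → α)) | g j = a} =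
      Fintype.card α ^ (Fintype.card ι - 2) := fun a => by
    have h := card_filter_forall_notMem_apply_eq_apply_eq (U := ∅) hij
      (notMem_empty a) (notMem_empty a)
    rw [card_empty, Nat.sub_zero] at h
    rw [filter_filter, ← h]
    congr 1; ext g; simp only [mem_filter, mem_univ, true_and, notMem_empty, not_false_eq_true,
      implies_true]
    grind
  rw [card_eq_sum_card_fiberwise (f := fun g => g j) (t := univ) (fun _ _ => mem_coe.2 (mem_univ _)),
    sum_congr rfl fun a _ => hfiber a, sum_const, card_univ, smul_eq_mul, ← pow_succ']
  congr 1
  omega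

lemma sum_ite_forall_notMem {U : Finset α} (hU : #U < Fintype.card α) :
    ∑ g : ι → α, (if ∀ x, g x ∉ U then
      (1 / ((Fintype.card α : ℝ) - #U)) ^ Fintype.card ι else 0) = 1 := by
  have hq : (0 : ℝ) < Fintype.card α - #U := sub_pos.2 (by exact_mod_cast hU)
  rw [← sum_filter, sum_const, card_filter_forall_notMem, nsmul_eq_mul, Nat.cast_pow,
    Nat.cast_sub hU.le, ← mul_pow, mul_one_div_cancel hq.ne', one_pow]

lemma sum_ite_forall_notMem_apply_eq_apply_eq {i j : ι} (hij : i ≠ j) {U : Finset α}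
    (hU : #U < Fintype.card α) {a b : α} (ha : a ∉ U) (hb : b ∉ U) :
    ∑ g : ι → α, (if (∀ x, g x ∉ U) ∧ g i = a ∧ g j = b then
      (1 / ((Fintype.card α : ℝ) - #U)) ^ Fintype.card ι else 0) =
      (1 / ((Fintype.card α : ℝ) - #U)) ^ 2 := by
  have hq : (0 : ℝ) < Fintype.card α - #U := sub_pos.2 (by exact_mod_cast hU)
  have h2 : 2 ≤ Fintype.card ι := (card_pair hij).symm.trans_le (card_le_univ _)
  rw [← sum_filter, sum_const, card_filter_forall_notMem_apply_eq_apply_eq hij ha hb,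
    nsmul_eq_mul, Nat.cast_pow, Nat.cast_sub hU.le, ← Nat.sub_add_cancel h2, pow_add,
    Nat.add_sub_cancel, ← mul_assoc, ← mul_pow, mul_one_div_cancel hq.ne', one_pow, one_mul]

lemma sum_ite_apply_eq_apply {i j : ι} (hij : i ≠ j) (d : ℝ) :
    ∑ g : ι → α, (if g i = g j then (1 / (Fintype.card α : ℝ)) ^ Fintype.card ι * d else 0) =
      d / Fintype.card α := by
  have h1 : 1 ≤ Fintype.card ι := Fintype.card_pos_iff.2 ⟨i⟩
  rw [← sum_filter, sum_const, card_filter_apply_eq_apply hij, nsmul_eq_mul, Nat.cast_pow,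
    ← Nat.sub_add_cancel h1, Nat.add_sub_cancel, pow_succ]
  rcases eq_or_ne (Fintype.card α : ℝ) 0 with h | h
  · simp [h]
  · rw [mul_assoc ((1 / _) ^ _), ← mul_assoc, ← mul_pow, mul_one_div_cancel h, one_pow, one_mul,
      one_div_mul_eq_div]

end FunctionCounting

lemma one_div_sub_mem_Icc {m c k n : ℝ} (hm : 0 < m) (hc : 0 < c) (hk : 0 ≤ k) (hkn : k ≤ n)
    (hmc : m / c ≤ m - n) : 1 / (m - k) ∈ Set.Icc (1 / m) (c / m) := by
  have hmc0 : 0 < m / c := div_pos hm hc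
  refine ⟨one_div_le_one_div_of_le (by linarith) (by linarith), ?_⟩
  calc 1 / (m - k) ≤ 1 / (m / c) := one_div_le_one_div_of_le hmc0 (by linarith)
    _ = c / m := one_div_div m c

section Model

variable {n1 n2 m : ℕ}

lemma fsExp_sum {ι : Type*} (s : Finset ι) (f : ι → FSSpace n1 n2 m → ℝ) :
    fsExp n1 n2 m (fun ω => ∑ i ∈ s, f i ω) = ∑ i ∈ s, fsExp n1 n2 m (f i) := by
  simp only [fsExp, mul_sum]
  exact sum_comm

lemma fsWeight_mul_Zind (v : Fin n1 × Fin n1 × Fin n2 × Fin n2) (f1 s1 : Fin n1 → Fin m)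
    (f2 s2 : Fin n2 → Fin m) :
    fsWeight n1 n2 m (f1, s1, f2, s2) * Zind v (f1, s1, f2, s2) =
      (if f1 v.1 = f1 v.2.1 then (1 / (m : ℝ)) ^ n1 else 0) *
        ((if ∀ x, s1 x ∉ univ.image f1 then (1 / ((m : ℝ) - #(univ.image f1))) ^ n1 else 0) *
          ((if (∀ y, f2 y ∉ univ.image f1) ∧ f2 v.2.2.1 = s1 v.1 ∧ f2 v.2.2.2 = s1 v.2.1 then
              (1 / ((m : ℝ) - #(univ.image f1))) ^ n2 else 0) *
            (if ∀ y, s2 y ∉ univ.image f1 ∪ univ.image f2 then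
              (1 / ((m : ℝ) - #(univ.image f1 ∪ univ.image f2))) ^ n2 else 0))) := by
  unfold fsWeight Zind ZEvent FSValid FOne FTwo fOne sOne fTwo sTwo
  split_ifs <;> first | ring1 | (exfalso; tauto)

lemma fsExp_Zind (hm : n1 + n2 < m) {v : Fin n1 × Fin n1 × Fin n2 × Fin n2}
    (hy : v.2.2.1 ≠ v.2.2.2) :
    fsExp n1 n2 m (Zind v) = ∑ f1 : Fin n1 → Fin m, if f1 v.1 = f1 v.2.1 then
      (1 / (m : ℝ)) ^ n1 * (1 / ((m : ℝ) - #(univ.image f1))) ^ 2 else 0 := by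
  obtain ⟨x1, x2, y1, y2⟩ := v
  simp only [fsExp, Fintype.sum_prod_type, fsWeight_mul_Zind]
  refine sum_congr rfl fun f1 _ => ?_
  set K := univ.image f1
  have hK : #K ≤ n1 := by simpa using card_image_le (s := univ) (f := f1)
  have hKm : #K < Fintype.card (Fin m) := by simp; omega
  have hKU : ∀ f2 : Fin n2 → Fin m, #(K ∪ univ.image f2) < Fintype.card (Fin m) := fun f2 => by
    have h2 : #(univ.image f2) ≤ n2 := by simpa using card_image_le (s := univ) (f := f2)
    have := card_union_le K (univ.image f2)
    simp only [Fintype.card_fin]; omega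
  have hs2 : ∀ f2 : Fin n2 → Fin m, ∑ s2 : Fin n2 → Fin m,
      (if ∀ y, s2 y ∉ K ∪ univ.image f2 then
        (1 / ((m : ℝ) - #(K ∪ univ.image f2))) ^ n2 else 0) = 1 := fun f2 => by
    simpa using sum_ite_forall_notMem (ι := Fin n2) (hKU f2)
  have hs1 : ∑ s1 : Fin n1 → Fin m,
      (if ∀ x, s1 x ∉ K then (1 / ((m : ℝ) - #K)) ^ n1 else 0) = 1 := by
    simpa using sum_ite_forall_notMem (ι := Fin n1) hKm
  have hf2 : ∀ s1 : Fin n1 → Fin m,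
      (if ∀ x, s1 x ∉ K then (1 / ((m : ℝ) - #K)) ^ n1 else 0) * ∑ f2 : Fin n2 → Fin m,
        (if (∀ y, f2 y ∉ K) ∧ f2 y1 = s1 x1 ∧ f2 y2 = s1 x2 then
          (1 / ((m : ℝ) - #K)) ^ n2 else 0) =
      (if ∀ x, s1 x ∉ K then (1 / ((m : ℝ) - #K)) ^ n1 else 0) * (1 / ((m : ℝ) - #K)) ^ 2 := by
    intro s1
    split_ifs with hs1
    · have h := sum_ite_forall_notMem_apply_eq_apply_eq hy hKm (hs1 x1) (hs1 x2)
      simp only [Fintype.card_fin] at h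
      rw [h]
    · simp only [zero_mul]
  simp_rw [← mul_sum, hs2, mul_one, hf2, ← sum_mul, hs1, one_mul, ite_mul, zero_mul]

lemma fsExp_Zind_mem_Icc (hm : n1 + n2 < m) {c : ℝ} (hc : 1 < c)
    (hmc : (m : ℝ) / c ≤ m - (n1 + n2 : ℕ)) {v : Fin n1 × Fin n1 × Fin n2 × Fin n2}
    (hx : v.1 ≠ v.2.1) (hy : v.2.2.1 ≠ v.2.2.2) :
    fsExp n1 n2 m (Zind v) ∈ Set.Icc (1 / (m : ℝ) ^ 3) (c ^ 2 / (m : ℝ) ^ 3) := by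
  have hm0 : (0 : ℝ) < m := by exact_mod_cast (Nat.zero_lt_of_lt hm)
  have hsum : ∀ d : ℝ, ∑ f1 : Fin n1 → Fin m,
      (if f1 v.1 = f1 v.2.1 then (1 / (m : ℝ)) ^ n1 * d else 0) = d / m := fun d => by
    simpa using sum_ite_apply_eq_apply (α := Fin m) hx d
  have hbounds : ∀ f1 : Fin n1 → Fin m,
      1 / ((m : ℝ) - #(univ.image f1)) ∈ Set.Icc (1 / (m : ℝ)) (c / m) := fun f1 => by
    have hK : #(univ.image f1) ≤ n1 := by simpa using card_image_le (s := univ) (f := f1)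
    exact one_div_sub_mem_Icc hm0 (by linarith) (Nat.cast_nonneg _) (by exact_mod_cast (by omega)) hmc
  rw [fsExp_Zind hm hy]
  constructor
  · calc 1 / (m : ℝ) ^ 3 = (1 / (m : ℝ)) ^ 2 / m := by ring
      _ ≤ _ := by
        rw [← hsum]
        refine sum_le_sum fun f1 _ => ?_
        split_ifs
        · gcongr ?_ * ?_ ^ 2
          exact (hbounds f1).1
        · rfl
  · calc _ ≤ ∑ f1 : Fin n1 → Fin m,
          (if f1 v.1 = f1 v.2.1 then (1 / (m : ℝ)) ^ n1 * (c / m) ^ 2 else 0) := by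
          refine sum_le_sum fun f1 _ => ?_
          split_ifs
          · have h0 : 0 ≤ 1 / ((m : ℝ) - #(univ.image f1)) :=
              (one_div_pos.2 hm0).le.trans (hbounds f1).1
            gcongr ?_ * ?_ ^ 2
            exact (hbounds f1).2
          · rfl
      _ = c ^ 2 / (m : ℝ) ^ 3 := by rw [hsum]; ring

end Model

/-- In the random fs-relation graph model, if `m - n ≥ m/c` for a
constant `c > 1`, then `|T|/m³ ≤ E[Z] ≤ c²|T|/m³`. -/
theorem Z_expectation_bounds (n1 n2 m : ℕ) (hm : n1 + n2 < m)
    (c : ℝ) (hc : 1 < c) (hmc : (m : ℝ) / c ≤ (m : ℝ) - ((n1 + n2 : ℕ) : ℝ)) :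
    ((Ttup n1 n2).card : ℝ) / (m : ℝ) ^ 3 ≤ fsExp n1 n2 m (Ztotal n1 n2 m) ∧
      fsExp n1 n2 m (Ztotal n1 n2 m) ≤
        c ^ 2 * ((Ttup n1 n2).card : ℝ) / (m : ℝ) ^ 3 := by
  have hbounds : ∀ v ∈ Ttup n1 n2,
      fsExp n1 n2 m (Zind v) ∈ Set.Icc (1 / (m : ℝ) ^ 3) (c ^ 2 / (m : ℝ) ^ 3) := fun v hv => by
    simp only [Ttup, mem_filter] at hv
    exact fsExp_Zind_mem_Icc hm hc hmc hv.2.1.ne hv.2.2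
  unfold Ztotal
  rw [fsExp_sum]
  constructor
  · calc ((Ttup n1 n2).card : ℝ) / (m : ℝ) ^ 3 = ∑ _v ∈ Ttup n1 n2, 1 / (m : ℝ) ^ 3 := by
          rw [sum_const, nsmul_eq_mul]; ring
      _ ≤ _ := sum_le_sum fun v hv => (hbounds v hv).1
  · calc _ ≤ ∑ _v ∈ Ttup n1 n2, c ^ 2 / (m : ℝ) ^ 3 := sum_le_sum fun v hv => (hbounds v hv).2
      _ = c ^ 2 * ((Ttup n1 n2).card : ℝ) / (m : ℝ) ^ 3 := by rw [sum_const, nsmul_eq_mul]; ring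
end
end

section
/- In the random fs-relation graph model with n1 = δn and n2 = (1-δ)n for a constant δ ∈ (0,1) (δn an integer) and with m - n ≥ m/c for a constant c > 1, one has Σ_{v ∈ T} Σ_{w ∈ T_2(v)} E[Z_v·Z_w] ≤ ( c⁴(1-δ)²·n²/m⁵ + 2c³(1-δ)·n/m⁴ )·|T|. -/
/-!
Fix `v = (x₁, x₂, y₁, y₂)`. A tuple 2-common to `v` has the same `x₁ < x₂`, so it is
`w = (x₁, x₂, a, b)` with `(a, b) ≠ (y₁, y₂)`, and `Z_v Z_w = 1` says that `f1(x₁) = f1(x₂)`,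
that `f2 = s1(x₁)` on `A = {y₁, a}` and that `f2 = s1(x₂)` on `B = {y₂, b}`. Given `f1`, the items
`s1` and `f2` are independent and uniform on the complement `C` of `F1`. So, given
`f1(x₁) = f1(x₂)` (probability `1/m`), the event has probability `|C|⁻ʳ` with `r = attachRank A B`:
`|A ∪ B|`, plus one if `A` and `B` meet, which forces `s1(x₁) = s1(x₂)`. Here `|C|⁻¹ ≤ 1` and
`|C| ≥ m - n ≥ m / c`. Finally `r ≥ 3`, and `r ≥ 4` unless `a = y₁`, `b = y₂` or
`(a, b) = (y₂, y₁)`: at most `2 n2` pairs `(a, b)` are exceptional, out of at most `n2²`.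
-/

open scoped Classical
open Finset

noncomputable section

section UniformWeight

variable {α β : Type*} [Fintype α] [DecidableEq β]

def uniformWeight (C : Finset β) (h : α → β) : ℝ :=
  if ∀ a, h a ∈ C then (#C : ℝ)⁻¹ ^ Fintype.card α else 0

lemma uniformWeight_nonneg (C : Finset β) (h : α → β) : 0 ≤ uniformWeight C h := by
  unfold uniformWeight
  positivity

lemma uniformWeight_eq_prod (C : Finset β) (h : α → β) :
    uniformWeight C h = ∏ a, if h a ∈ C then (#C : ℝ)⁻¹ else 0 := by
  rw [prod_ite_zero, prod_const, card_univ, uniformWeight]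
  simp

variable [DecidableEq α] [Fintype β]

lemma sum_uniformWeight_mul_ite_eqOn {C : Finset β} (hC : C.Nonempty) (S : Finset α)
    (c : α → β) :
    ∑ h : α → β, uniformWeight C h * (if ∀ a ∈ S, h a = c a then 1 else 0) =
      if ∀ a ∈ S, c a ∈ C then (#C : ℝ)⁻¹ ^ #S else 0 := by
  have hC0 : (#C : ℝ) ≠ 0 := by exact_mod_cast hC.card_pos.ne'
  have factor : ∀ h : α → β, uniformWeight C h * (if ∀ a ∈ S, h a = c a then 1 else 0) =
      ∏ a, if h a ∈ C ∧ (a ∈ S → h a = c a) then (#C : ℝ)⁻¹ else 0 := by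
    intro h
    rw [uniformWeight_eq_prod, prod_ite_zero, prod_ite_zero]
    simp only [mem_univ, true_implies, forall_and]
    split_ifs <;> simp_all
  have slice : ∀ a, ∑ b, (if b ∈ C ∧ (a ∈ S → b = c a) then (#C : ℝ)⁻¹ else 0) =
      if a ∈ S then (if c a ∈ C then (#C : ℝ)⁻¹ else 0) else 1 := by
    intro a
    by_cases ha : a ∈ S
    · simp only [ha, true_implies, if_true]
      rw [Fintype.sum_eq_single (c a) fun b hb => if_neg fun h => hb h.2]
      simp
    · simp only [ha, false_implies, and_true, if_false]
      rw [sum_ite_mem, univ_inter, sum_const, nsmul_eq_mul, mul_inv_cancel₀ hC0]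
  simp_rw [factor]
  rw [← Fintype.prod_sum fun a b => if b ∈ C ∧ (a ∈ S → b = c a) then (#C : ℝ)⁻¹ else 0]
  simp_rw [slice]
  rw [prod_ite_mem, univ_inter, prod_ite_zero, prod_const]
  congr

lemma sum_uniformWeight {C : Finset β} (hC : C.Nonempty) :
    ∑ h : α → β, uniformWeight C h = 1 := by
  simpa using sum_uniformWeight_mul_ite_eqOn (α := α) hC ∅ fun _ => hC.choose

lemma sum_uniformWeight_mul_ite_eq {C : Finset β} (hC : C.Nonempty) {x₁ x₂ : α}
    (hx : x₁ ≠ x₂) :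
    ∑ h : α → β, uniformWeight C h * (if h x₁ = h x₂ then 1 else 0) = (#C : ℝ)⁻¹ := by
  have hC0 : (#C : ℝ) ≠ 0 := by exact_mod_cast hC.card_pos.ne'
  have split : ∀ h : α → β, (if h x₁ = h x₂ then (1 : ℝ) else 0) =
      ∑ b, if ∀ a ∈ ({x₁, x₂} : Finset α), h a = b then 1 else 0 := by
    intro h
    rw [Fintype.sum_eq_single (h x₁) fun b hb => if_neg fun H => hb (H x₁ (by simp)).symm]
    simp only [mem_insert, mem_singleton, forall_eq_or_imp, forall_eq]
    simp [eq_comm]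
  simp_rw [split, mul_sum]
  rw [sum_comm]
  simp_rw [sum_uniformWeight_mul_ite_eqOn hC, card_pair hx]
  simp [sum_ite_mem, sq, hC0]

lemma sum_uniformWeight_mul_congr {C : Finset β} {F G : (α → β) → ℝ}
    (hFG : ∀ h, (∀ a, h a ∈ C) → F h = G h) :
    ∑ h, uniformWeight C h * F h = ∑ h, uniformWeight C h * G h := by
  refine sum_congr rfl fun h _ => ?_
  by_cases hh : ∀ a, h a ∈ C
  · rw [hFG h hh]
  · simp [uniformWeight, hh]

variable {γ : Type*} [DecidableEq γ]

def attachRank (A B : Finset γ) : ℕ := #(A ∪ B) + if Disjoint A B then 0 else 1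

lemma le_attachRank_pair {y₁ y₂ a b : γ} (hy : y₁ ≠ y₂) (hne : a ≠ y₁ ∨ b ≠ y₂) :
    (if a = y₁ ∨ b = y₂ ∨ (a = y₂ ∧ b = y₁) then 3 else 4) ≤ attachRank {y₁, a} {y₂, b} := by
  unfold attachRank
  by_cases h1 : a = y₁ <;> by_cases h2 : b = y₂ <;> by_cases h3 : a = y₂ <;>
    by_cases h4 : b = y₁ <;> by_cases h5 : a = b <;>
    simp_all [card_insert_of_notMem, disjoint_singleton_left, eq_comm]

variable [Fintype γ]

lemma sum_uniformWeight_attach {C : Finset β} (hC : C.Nonempty) {x₁ x₂ : α}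
    (hx : x₁ ≠ x₂) (A B : Finset γ) :
    ∑ s : α → β, ∑ f : γ → β, uniformWeight C s * uniformWeight C f *
        (if (∀ y ∈ A, f y = s x₁) ∧ (∀ y ∈ B, f y = s x₂) then 1 else 0) =
      (#C : ℝ)⁻¹ ^ attachRank A B := by
  simp_rw [mul_assoc, ← mul_sum]
  by_cases hAB : Disjoint A B
  · have inner : ∀ s : α → β, (∀ a, s a ∈ C) →
        ∑ f : γ → β, uniformWeight C f *
          (if (∀ y ∈ A, f y = s x₁) ∧ (∀ y ∈ B, f y = s x₂) then 1 else 0) =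
        (#C : ℝ)⁻¹ ^ #(A ∪ B) := by
      intro s hs
      have glue : ∀ f : γ → β, ((∀ y ∈ A, f y = s x₁) ∧ (∀ y ∈ B, f y = s x₂)) ↔
          ∀ y ∈ A ∪ B, f y = if y ∈ A then s x₁ else s x₂ := by
        intro f
        simp only [mem_union, or_imp, forall_and]
        exact and_congr (forall₂_congr fun y hy => by rw [if_pos hy])
          (forall₂_congr fun y hy => by rw [if_neg (disjoint_right.mp hAB hy)])
      simp only [glue]
      rw [sum_uniformWeight_mul_ite_eqOn hC, if_pos fun y _ => by split_ifs <;> exact hs _]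
    rw [sum_uniformWeight_mul_congr inner, ← sum_mul, sum_uniformWeight hC, one_mul, attachRank,
      if_pos hAB, add_zero]
  · obtain ⟨y₀, hy₀A, hy₀B⟩ := not_disjoint_iff.mp hAB
    have inner : ∀ s : α → β, (∀ a, s a ∈ C) →
        ∑ f : γ → β, uniformWeight C f *
          (if (∀ y ∈ A, f y = s x₁) ∧ (∀ y ∈ B, f y = s x₂) then 1 else 0) =
        (if s x₁ = s x₂ then 1 else 0) * (#C : ℝ)⁻¹ ^ #(A ∪ B) := by
      intro s hs
      by_cases hs₁₂ : s x₁ = s x₂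
      · have glue : ∀ f : γ → β, ((∀ y ∈ A, f y = s x₁) ∧ (∀ y ∈ B, f y = s x₂)) ↔
            ∀ y ∈ A ∪ B, f y = s x₁ := by
          intro f
          simp only [mem_union, or_imp, forall_and, hs₁₂]
        simp only [glue]
        rw [sum_uniformWeight_mul_ite_eqOn hC, if_pos fun y _ => hs _, if_pos hs₁₂, one_mul]
      · rw [if_neg hs₁₂, zero_mul]
        refine sum_eq_zero fun f _ => ?_
        rw [if_neg fun H => hs₁₂ ((H.1 y₀ hy₀A).symm.trans (H.2 y₀ hy₀B)), mul_zero]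
    rw [sum_uniformWeight_mul_congr inner]
    simp_rw [← mul_assoc]
    rw [← sum_mul, sum_uniformWeight_mul_ite_eq hC hx, attachRank, if_neg hAB, pow_succ',
      mul_comm]

lemma card_pairs_sharing_coord_or_swap_le (y₁ y₂ : γ) :
    #((univ.erase (y₁, y₂)).filter fun p : γ × γ => p.1 = y₁ ∨ p.2 = y₂ ∨ p = (y₂, y₁)) ≤
      2 * Fintype.card γ := by
  rw [filter_erase, card_erase_of_mem (by simp)]
  have hsub : (univ.filter fun p : γ × γ => p.1 = y₁ ∨ p.2 = y₂ ∨ p = (y₂, y₁)) ⊆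
      ({y₁} ×ˢ univ ∪ univ ×ˢ {y₂}) ∪ {(y₂, y₁)} := by
    intro p
    simp only [mem_filter, mem_univ, true_and, mem_union, mem_product, mem_singleton, and_true]
    tauto
  have hunion := (card_le_card hsub).trans ((card_union_le _ _).trans
    (add_le_add (card_union_le _ _) le_rfl))
  simp only [card_product, card_singleton, card_univ, one_mul, mul_one] at hunion
  omega

end UniformWeight

lemma Finset.pair_eq_pair_of_card_inter_eq_two {ι : Type*} [DecidableEq ι] {a b c d : ι}
    (h : #({a, b} ∩ {c, d} : Finset ι) = 2) : ({a, b} : Finset ι) = {c, d} :=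
  (eq_of_subset_of_card_le inter_subset_left (h ▸ card_le_two)).symm.trans
    (eq_of_subset_of_card_le inter_subset_right (h ▸ card_le_two))

lemma Set.eq_and_eq_of_pair_eq_pair_of_lt {ι : Type*} [LinearOrder ι] {a b c d : ι}
    (hab : a < b) (hcd : c < d) (h : ({a, b} : Set ι) = {c, d}) : a = c ∧ b = d := by
  rcases Set.pair_eq_pair_iff.mp h with h | ⟨rfl, rfl⟩
  · exact h
  · exact absurd (hab.trans hcd) (lt_irrefl a)

section Model

variable {n1 n2 m : ℕ}

lemma card_image_univ_le {k : ℕ} (g : Fin k → Fin m) : #(univ.image g) ≤ k :=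
  card_image_le.trans_eq (card_fin k)

lemma nonempty_compl_of_card_lt {X : Finset (Fin m)} (hX : #X < m) : Xᶜ.Nonempty := by
  rw [← card_pos, card_compl, Fintype.card_fin]
  omega

lemma fsWeight_eq (g s : Fin n1 → Fin m) (f t : Fin n2 → Fin m) :
    fsWeight n1 n2 m (g, s, f, t) =
      uniformWeight univ g * uniformWeight (univ.image g)ᶜ s *
        uniformWeight (univ.image g)ᶜ f * uniformWeight (univ.image g ∪ univ.image f)ᶜ t := by
  have inv_card_compl : ∀ F : Finset (Fin m), 1 / ((m : ℝ) - #F) = (#Fᶜ : ℝ)⁻¹ := fun F => by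
    rw [card_compl, Fintype.card_fin, Nat.cast_sub (by simpa using card_le_univ F), one_div]
  simp only [fsWeight, FSValid, FOne, FTwo, fOne, sOne, fTwo, sTwo, inv_card_compl,
    uniformWeight, mem_univ, implies_true, if_true, card_univ, Fintype.card_fin, one_div,
    mem_compl]
  split_ifs <;> first | ring1 | tauto

lemma fsExp_nonneg {f : FSSpace n1 n2 m → ℝ} (hf : ∀ ω, 0 ≤ f ω) : 0 ≤ fsExp n1 n2 m f := by
  refine sum_nonneg fun ⟨g, s, f', t⟩ _ => mul_nonneg ?_ (hf _)
  rw [fsWeight_eq]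
  exact mul_nonneg (mul_nonneg (mul_nonneg (uniformWeight_nonneg _ _)
    (uniformWeight_nonneg _ _)) (uniformWeight_nonneg _ _)) (uniformWeight_nonneg _ _)

lemma fsExp_eq_sum_uniformWeight (hnm : n1 + n2 < m)
    (F : (Fin n1 → Fin m) → (Fin n1 → Fin m) → (Fin n2 → Fin m) → ℝ) :
    fsExp n1 n2 m (fun ω => F (fOne ω) (sOne ω) (fTwo ω)) =
      ∑ g, uniformWeight univ g * ∑ s, ∑ f,
        uniformWeight (univ.image g)ᶜ s * uniformWeight (univ.image g)ᶜ f * F g s f := by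
  simp only [fsExp, Fintype.sum_prod_type, fsWeight_eq, mul_sum]
  refine sum_congr rfl fun g _ => sum_congr rfl fun s _ => sum_congr rfl fun f _ => ?_
  simp only [fOne, sOne, fTwo]
  have hgf : #(univ.image g ∪ univ.image f) < m := ((card_union_le _ _).trans
    (add_le_add (card_image_univ_le g) (card_image_univ_le f))).trans_lt hnm
  rw [← sum_mul, ← mul_sum, sum_uniformWeight (nonempty_compl_of_card_lt hgf)]
  ring

lemma fsExp_attach (hnm : n1 + n2 < m) {x₁ x₂ : Fin n1} (hx : x₁ ≠ x₂)
    (A B : Finset (Fin n2)) :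
    fsExp n1 n2 m (fun ω => if fOne ω x₁ = fOne ω x₂ ∧ (∀ y ∈ A, fTwo ω y = sOne ω x₁) ∧
        (∀ y ∈ B, fTwo ω y = sOne ω x₂) then 1 else 0) =
      ∑ g : Fin n1 → Fin m, uniformWeight univ g * (if g x₁ = g x₂ then 1 else 0) *
        (#(univ.image g)ᶜ : ℝ)⁻¹ ^ attachRank A B := by
  refine (fsExp_eq_sum_uniformWeight hnm fun g s f => if g x₁ = g x₂ ∧
    (∀ y ∈ A, f y = s x₁) ∧ (∀ y ∈ B, f y = s x₂) then 1 else 0).trans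
    (sum_congr rfl fun g _ => ?_)
  by_cases hg : g x₁ = g x₂
  · have hCg := nonempty_compl_of_card_lt ((card_image_univ_le g).trans_lt (by omega))
    simp only [hg, true_and, if_true, mul_one]
    congr 1
    -- `simp` has changed the `Decidable` instance of the remaining condition
    convert sum_uniformWeight_attach hCg hx A B
  · simp [hg]

lemma inv_card_compl_image_le {c : ℝ} (hc : 0 < c) (hm : 0 < m)
    (hmc : (m : ℝ) / c ≤ m - n1) (g : Fin n1 → Fin m) :
    (#(univ.image g)ᶜ : ℝ)⁻¹ ≤ c / m := by
  have hcard : (m : ℝ) - n1 ≤ #(univ.image g)ᶜ := by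
    rw [card_compl, Fintype.card_fin,
      Nat.cast_sub (card_le_univ _ |>.trans_eq (Fintype.card_fin m))]
    gcongr
    exact_mod_cast card_image_univ_le g
  rw [← inv_div]
  exact inv_anti₀ (by positivity) (hmc.trans hcard)

lemma fsExp_attach_le (hnm : n1 + n2 < m) {c : ℝ} (hc : 0 < c)
    (hmc : (m : ℝ) / c ≤ m - n1) {x₁ x₂ : Fin n1} (hx : x₁ ≠ x₂) (A B : Finset (Fin n2))
    {k : ℕ} (hk : k ≤ attachRank A B) :
    fsExp n1 n2 m (fun ω => if fOne ω x₁ = fOne ω x₂ ∧ (∀ y ∈ A, fTwo ω y = sOne ω x₁) ∧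
        (∀ y ∈ B, fTwo ω y = sOne ω x₂) then 1 else 0) ≤ 1 / m * (c / m) ^ k := by
  have hm : 0 < m := by omega
  have hpow : ∀ g : Fin n1 → Fin m,
      (#(univ.image g)ᶜ : ℝ)⁻¹ ^ attachRank A B ≤ (c / m) ^ k := by
    intro g
    have hCg := nonempty_compl_of_card_lt ((card_image_univ_le g).trans_lt (by omega))
    have hone : (#(univ.image g)ᶜ : ℝ)⁻¹ ≤ 1 :=
      inv_le_one_of_one_le₀ (by exact_mod_cast hCg.card_pos)
    calc (#(univ.image g)ᶜ : ℝ)⁻¹ ^ attachRank A B ≤ (#(univ.image g)ᶜ : ℝ)⁻¹ ^ k :=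
          pow_le_pow_of_le_one (by positivity) hone hk
      _ ≤ (c / m) ^ k := pow_le_pow_left₀ (by positivity) (inv_card_compl_image_le hc hm hmc g) k
  rw [fsExp_attach hnm hx]
  calc _ ≤ ∑ g : Fin n1 → Fin m,
          uniformWeight univ g * (if g x₁ = g x₂ then 1 else 0) * (c / m) ^ k :=
        sum_le_sum fun g _ => mul_le_mul_of_nonneg_left (hpow g)
          (mul_nonneg (uniformWeight_nonneg _ _) (by positivity))
    _ = 1 / m * (c / m) ^ k := by
      rw [← sum_mul, sum_uniformWeight_mul_ite_eq ⟨⟨0, hm⟩, mem_univ _⟩ hx, card_univ,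
        Fintype.card_fin, one_div]

lemma eq_of_mem_Tcommon_two {x₁ x₂ : Fin n1} {y₁ y₂ : Fin n2}
    {w : Fin n1 × Fin n1 × Fin n2 × Fin n2} (hx : x₁ < x₂)
    (hw : w ∈ Tcommon n1 n2 2 (x₁, x₂, y₁, y₂)) :
    w.1 = x₁ ∧ w.2.1 = x₂ ∧ (w.2.2.1 ≠ y₁ ∨ w.2.2.2 ≠ y₂) := by
  obtain ⟨x₁', x₂', a, b⟩ := w
  simp only [Tcommon, Ttup, mem_filter, mem_univ, true_and] at hw
  obtain ⟨⟨hx', -⟩, hne, hcard⟩ := hw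
  obtain ⟨rfl, rfl⟩ := Set.eq_and_eq_of_pair_eq_pair_of_lt hx hx'
    (by rw [← coe_pair, ← coe_pair, pair_eq_pair_of_card_inter_eq_two hcard])
  simp only [ne_eq, Prod.mk.injEq, true_and, not_and_or] at hne
  exact ⟨rfl, rfl, hne⟩

lemma sum_Tcommon_two_le_sum_erase {x₁ x₂ : Fin n1} {y₁ y₂ : Fin n2} (hx : x₁ < x₂)
    {F : Fin n1 × Fin n1 × Fin n2 × Fin n2 → ℝ} (hF : ∀ w, 0 ≤ F w) :
    ∑ w ∈ Tcommon n1 n2 2 (x₁, x₂, y₁, y₂), F w ≤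
      ∑ p ∈ (univ : Finset (Fin n2 × Fin n2)).erase (y₁, y₂), F (x₁, x₂, p.1, p.2) := by
  refine (sum_le_sum_of_subset_of_nonneg (t := ((univ : Finset (Fin n2 × Fin n2)).erase
    (y₁, y₂)).image fun p => (x₁, x₂, p.1, p.2)) (fun w hw => ?_) fun w _ _ => hF w).trans_eq
    (sum_image fun p _ q _ h => by simpa [Prod.ext_iff] using h)
  obtain ⟨h₁, h₂, hne⟩ := eq_of_mem_Tcommon_two hx hw
  refine mem_image.mpr ⟨(w.2.2.1, w.2.2.2), ?_, by rw [← h₁, ← h₂]⟩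
  exact mem_erase.mpr ⟨fun h => by simp only [Prod.mk.injEq] at h; tauto, mem_univ _⟩

lemma Zind_mul_Zind (x₁ x₂ : Fin n1) (y₁ y₂ a b : Fin n2) (ω : FSSpace n1 n2 m) :
    Zind (x₁, x₂, y₁, y₂) ω * Zind (x₁, x₂, a, b) ω =
      if fOne ω x₁ = fOne ω x₂ ∧ (∀ y ∈ ({y₁, a} : Finset (Fin n2)), fTwo ω y = sOne ω x₁) ∧
        (∀ y ∈ ({y₂, b} : Finset (Fin n2)), fTwo ω y = sOne ω x₂) then 1 else 0 := by
  rw [Zind, Zind, ite_zero_mul_ite_zero, mul_one]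
  refine if_congr ?_ rfl rfl
  simp only [ZEvent, forall_mem_insert, mem_singleton, forall_eq]
  tauto

lemma fsExp_Zind_mul_Zind_le (hnm : n1 + n2 < m) {c : ℝ} (hc : 0 < c)
    (hmc : (m : ℝ) / c ≤ m - n1) {x₁ x₂ : Fin n1} (hx : x₁ ≠ x₂) {y₁ y₂ a b : Fin n2}
    (hy : y₁ ≠ y₂) (hne : a ≠ y₁ ∨ b ≠ y₂) :
    fsExp n1 n2 m (fun ω => Zind (x₁, x₂, y₁, y₂) ω * Zind (x₁, x₂, a, b) ω) ≤
      1 / m * (c / m) ^ (if a = y₁ ∨ b = y₂ ∨ (a = y₂ ∧ b = y₁) then 3 else 4) := by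
  simp only [Zind_mul_Zind]
  exact fsExp_attach_le hnm hc hmc hx _ _ (le_attachRank_pair hy hne)

lemma sum_Tcommon_two_fsExp_le (hnm : n1 + n2 < m) {c : ℝ} (hc : 0 < c)
    (hmc : (m : ℝ) / c ≤ m - n1) {v : Fin n1 × Fin n1 × Fin n2 × Fin n2}
    (hv : v ∈ Ttup n1 n2) :
    ∑ w ∈ Tcommon n1 n2 2 v, fsExp n1 n2 m (fun ω => Zind v ω * Zind w ω) ≤
      2 * n2 * (1 / m * (c / m) ^ 3) + n2 ^ 2 * (1 / m * (c / m) ^ 4) := by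
  obtain ⟨x₁, x₂, y₁, y₂⟩ := v
  obtain ⟨hx, hy⟩ : x₁ < x₂ ∧ y₁ ≠ y₂ := by simpa [Ttup] using hv
  set P := (univ : Finset (Fin n2 × Fin n2)).erase (y₁, y₂)
  set near : Fin n2 × Fin n2 → Prop := fun p => p.1 = y₁ ∨ p.2 = y₂ ∨ p = (y₂, y₁)
  set E : Fin n1 × Fin n1 × Fin n2 × Fin n2 → ℝ :=
    fun w => fsExp n1 n2 m (fun ω => Zind (x₁, x₂, y₁, y₂) ω * Zind w ω)
  have hterm : ∀ p ∈ P, E (x₁, x₂, p.1, p.2) ≤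
      (if near p then 1 / m * (c / m) ^ 3 else 0) + 1 / m * (c / m) ^ 4 := by
    rintro ⟨a, b⟩ hp
    have hne : a ≠ y₁ ∨ b ≠ y₂ := by
      have hp := (mem_erase.mp hp).1
      simp only [ne_eq, Prod.mk.injEq, not_and_or] at hp
      exact hp
    have hk := fsExp_Zind_mul_Zind_le hnm hc hmc hx.ne hy hne
    have h3 : (0 : ℝ) ≤ 1 / m * (c / m) ^ 3 := by positivity
    have h4 : (0 : ℝ) ≤ 1 / m * (c / m) ^ 4 := by positivity
    simp only [E, near, Prod.mk.injEq]
    split_ifs at hk ⊢ <;> linarith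
  have hnear : #(P.filter near) ≤ 2 * n2 := by
    simpa using card_pairs_sharing_coord_or_swap_le y₁ y₂
  have hcardP : #P ≤ n2 ^ 2 := by simp [P, sq]
  calc ∑ w ∈ Tcommon n1 n2 2 (x₁, x₂, y₁, y₂), E w
      ≤ ∑ p ∈ P, E (x₁, x₂, p.1, p.2) := sum_Tcommon_two_le_sum_erase hx fun w =>
        fsExp_nonneg fun ω => mul_nonneg (by unfold Zind; positivity) (by unfold Zind; positivity)
    _ ≤ ∑ p ∈ P, ((if near p then 1 / m * (c / m) ^ 3 else 0) + 1 / m * (c / m) ^ 4) :=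
        sum_le_sum hterm
    _ = #(P.filter near) * (1 / m * (c / m) ^ 3) + #P * (1 / m * (c / m) ^ 4) := by
        rw [sum_add_distrib, sum_ite, sum_const_zero, add_zero, sum_const, sum_const,
          nsmul_eq_mul, nsmul_eq_mul]
    _ ≤ 2 * n2 * (1 / m * (c / m) ^ 3) + n2 ^ 2 * (1 / m * (c / m) ^ 4) := by
        gcongr
        · exact_mod_cast hnear
        · exact_mod_cast hcardP

end Model

theorem two_common_sum_bound_general (δ : ℝ) (c : ℝ) (hc : 1 < c) (n n1 n2 m : ℕ)
    (hn1 : (n1 : ℝ) = δ * n) (hn2 : (n2 : ℝ) = (1 - δ) * n)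
    (hm : n < m) (hmc : (m : ℝ) / c ≤ (m : ℝ) - (n : ℝ)) :
    ∑ v ∈ Ttup n1 n2, ∑ w ∈ Tcommon n1 n2 2 v,
        fsExp n1 n2 m (fun ω => Zind v ω * Zind w ω) ≤
      (c ^ 4 * (1 - δ) ^ 2 * (n : ℝ) ^ 2 / (m : ℝ) ^ 5 +
        2 * c ^ 3 * (1 - δ) * (n : ℝ) / (m : ℝ) ^ 4) * ((Ttup n1 n2).card : ℝ) := by
  have hn : n1 + n2 = n := by exact_mod_cast (show ((n1 + n2 : ℕ) : ℝ) = n by push_cast; linarith)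
  have hmc₁ : (m : ℝ) / c ≤ m - n1 :=
    hmc.trans (by gcongr; exact_mod_cast hn ▸ le_add_right le_rfl)
  calc _ ≤ ∑ v ∈ Ttup n1 n2, (2 * n2 * (1 / m * (c / m) ^ 3) + n2 ^ 2 * (1 / m * (c / m) ^ 4)) :=
        sum_le_sum fun v hv => sum_Tcommon_two_fsExp_le (by omega) (by linarith) hmc₁ hv
    _ = _ := by
        rw [sum_const, nsmul_eq_mul, hn2]
        ring

/-- **Inequality (6).** In the random fs-relation graph model with
`n1 = δn`, `n2 = (1-δ)n` and `m - n ≥ m/c`, the sum over `v ∈ T` and `w ∈ T_2(v)` of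
`E[Z_v Z_w]` is at most `(c⁴(1-δ)²n²/m⁵ + 2c³(1-δ)n/m⁴)·|T|`. -/
theorem two_common_sum_bound (δ : ℝ) (hδ0 : 0 < δ) (hδ1 : δ < 1)
    (c : ℝ) (hc : 1 < c) (n n1 n2 m : ℕ)
    (hn1 : (n1 : ℝ) = δ * n) (hn2 : (n2 : ℝ) = (1 - δ) * n)
    (hm : n < m) (hmc : (m : ℝ) / c ≤ (m : ℝ) - (n : ℝ)) :
    ∑ v ∈ Ttup n1 n2, ∑ w ∈ Tcommon n1 n2 2 v,
        fsExp n1 n2 m (fun ω => Zind v ω * Zind w ω) ≤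
      (c ^ 4 * (1 - δ) ^ 2 * (n : ℝ) ^ 2 / (m : ℝ) ^ 5 +
        2 * c ^ 3 * (1 - δ) * (n : ℝ) / (m : ℝ) ^ 4) * ((Ttup n1 n2).card : ℝ) :=
  two_common_sum_bound_general δ c hc n n1 n2 m hn1 hn2 hm hmc
end
end

section
/- In the random fs-relation graph model with n1 = δn and n2 = (1-δ)n for a constant δ ∈ (0,1) (δn an integer) and with m - n ≥ m/c for a constant c > 1, one has Σ_{v ∈ T} Σ_{w ∈ T_1(v)} E[Z_v·Z_w] ≤ ( 4c⁴δ(1-δ)²·n³/m⁶ + 4c³δ(1-δ)·n²/m⁵ + 4c³δ·n/m⁵ )·|T|. -/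
open scoped Classical
open Finset

noncomputable section

/-! For `w ∈ T_1(v)`, the event `Z_v Z_w` forces the three distinct first-category applicants
of `v` and `w` to share their `f1`-item, which has probability at most `1/m²`. Given `f1`, the
`s1`- and `f2`-items are independent and uniform on the at least `m - n1 ≥ m/c` items outside
`F1`, and `Z_v Z_w` forces four independent equalities among them, each costing a factor `c/m`,
except when `w` pairs the shared applicant with the same second-category applicant as `v` does;
then only three are forced. Listing the shared applicant of `w` first, `w` is determined by that
applicant (two choices), its other applicant (at most `n1`) and its ordered pair of
second-category applicants (at most `n2²`, of which at most `n2` are exceptional). So each `v`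
contributes at most `2 n1 (n2 c³/m⁵ + n2² c⁴/m⁶)`, at most half of the claimed bound. -/

theorem Finset.mem_iff_notMem_of_card_inter_pair_eq_one {α : Type*} [DecidableEq α]
    {s : Finset α} {a b : α} (hab : a ≠ b) (h : #(s ∩ {a, b}) = 1) : a ∈ s ↔ b ∉ s := by
  by_cases ha : a ∈ s <;> by_cases hb : b ∈ s
  · rw [inter_insert_of_mem ha, inter_singleton_of_mem hb, card_pair hab] at h
    omega
  all_goals simp_all [inter_insert_of_notMem, inter_singleton_of_notMem]

theorem card_filter_piFinset_le_pow {ι α : Type*} [Fintype ι] [DecidableEq ι] [DecidableEq α]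
    (V : Finset α) (D : Finset ι) (p : ι → ι) (hp : ∀ i ∈ D, p i ∉ D) :
    #{u ∈ Fintype.piFinset (fun _ : ι => V) | ∀ i ∈ D, u i = u (p i)} ≤
      #V ^ (Fintype.card ι - #D) := by
  let restrict : (ι → α) → ({i // i ∉ D} → α) := fun u i => u i
  calc _ ≤ #(Fintype.piFinset fun _ : {i // i ∉ D} => V) := by
        refine Finset.card_le_card_of_injOn restrict (fun u hu => ?_) fun u hu u' hu' h => ?_
        · simp only [coe_filter, Fintype.mem_piFinset, Set.mem_ofPred_eq] at hu
          simpa [restrict] using fun i _ => hu.1 i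
        · simp only [coe_filter, Fintype.mem_piFinset, Set.mem_ofPred_eq] at hu hu'
          have off : ∀ i ∉ D, u i = u' i := fun i hi => congrFun h ⟨i, hi⟩
          funext i
          by_cases hi : i ∈ D
          · rw [hu.2 i hi, hu'.2 i hi, off _ (hp i hi)]
          · exact off i hi
    _ = #V ^ (Fintype.card ι - #D) := by
        rw [Fintype.card_piFinset, prod_const, card_univ, Fintype.card_subtype_compl,
          Fintype.card_coe]

theorem one_div_pow_mul_pow_sub {K : Type*} [Field K] {M : K} (hM : M ≠ 0) {k N : ℕ} (hk : k ≤ N) :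
    (1 / M) ^ N * M ^ (N - k) = (1 / M) ^ k := by
  rw [pow_sub₀ _ hM hk, one_div_pow, one_div_pow]
  field_simp

theorem card_filter_forall_notMem_s14 {k m : ℕ} (L : Finset (Fin m)) :
    #{g : Fin k → Fin m | ∀ i, g i ∉ L} = (m - #L) ^ k := by
  rw [show m - #L = #Lᶜ by simp [card_compl], ← Fintype.card_piFinset_const]
  congr 1
  ext g
  simp [Fintype.mem_piFinset]

section Model

variable {n1 n2 m : ℕ}

theorem fsWeight_nonneg (ω : FSSpace n1 n2 m) : 0 ≤ fsWeight n1 n2 m ω := by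
  have hcard : ∀ s : Finset (Fin m), (0 : ℝ) ≤ m - #s := fun s =>
    sub_nonneg.2 (by exact_mod_cast (card_le_univ s).trans (by simp))
  unfold fsWeight
  split_ifs
  · have := hcard (FOne ω)
    have := hcard (FOne ω ∪ FTwo ω)
    positivity
  · exact le_rfl

theorem fsProb_nonneg (S : FSSpace n1 n2 m → Prop) : 0 ≤ fsProb n1 n2 m S :=
  sum_nonneg fun ω _ => by split_ifs; exacts [fsWeight_nonneg ω, le_rfl]

theorem fsProb_mono {S S' : FSSpace n1 n2 m → Prop} (h : ∀ ω, S ω → S' ω) :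
    fsProb n1 n2 m S ≤ fsProb n1 n2 m S' := by
  refine sum_le_sum fun ω _ => ?_
  by_cases hS : S ω
  · rw [if_pos hS, if_pos (h ω hS)]
  · rw [if_neg hS]
    split_ifs
    exacts [fsWeight_nonneg ω, le_rfl]

theorem fsExp_Zind_mul_Zind (v w : Fin n1 × Fin n1 × Fin n2 × Fin n2) :
    fsExp n1 n2 m (fun ω => Zind v ω * Zind w ω) =
      fsProb n1 n2 m (fun ω => ZEvent v ω ∧ ZEvent w ω) := by
  refine sum_congr rfl fun ω _ => ?_
  by_cases hv : ZEvent v ω <;> by_cases hw : ZEvent w ω <;> simp [Zind, hv, hw]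

theorem sum_fsWeight_sTwo (hm : n1 + n2 < m) (f1 s1 : Fin n1 → Fin m) (f2 : Fin n2 → Fin m) :
    ∑ s2, fsWeight n1 n2 m (f1, s1, f2, s2) =
      if ∀ i, Sum.elim s1 f2 i ∈ (univ.image f1)ᶜ then
        (1 / (m : ℝ)) ^ n1 * (1 / ((m : ℝ) - #(univ.image f1))) ^ (n1 + n2) else 0 := by
  set K := univ.image f1
  set L := K ∪ univ.image f2
  have hL : #L < m := (card_union_le _ _).trans_lt <|
    (add_le_add (card_image_le.trans (by simp)) (card_image_le.trans (by simp))).trans_lt hm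
  have hvalid : ∀ s2, FSValid (f1, s1, f2, s2) ↔
      (∀ i, Sum.elim s1 f2 i ∈ Kᶜ) ∧ ∀ y, s2 y ∉ L := by
    intro s2
    simp [FSValid, Sum.forall, fOne, sOne, fTwo, sTwo, FOne, FTwo, K, L, and_assoc]
  split_ifs with hK
  · have hLr : ((m - #L : ℕ) : ℝ) ≠ 0 := by exact_mod_cast (Nat.sub_pos_of_lt hL).ne'
    have hcancel : ((m - #L : ℕ) : ℝ) ^ n2 * (1 / ((m - #L : ℕ) : ℝ)) ^ n2 = 1 := by
      rw [← mul_pow, mul_one_div_cancel hLr, one_pow]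
    have hw : ∀ s2, fsWeight n1 n2 m (f1, s1, f2, s2) = if ∀ y, s2 y ∉ L then
        (1 / (m : ℝ)) ^ n1 * (1 / ((m : ℝ) - #K)) ^ (n1 + n2) * (1 / ((m : ℝ) - #L)) ^ n2
        else 0 := by
      intro s2
      simp only [fsWeight, hvalid, hK, implies_true, true_and]
      rfl
    rw [sum_congr rfl fun s2 _ => hw s2, Finset.sum_ite, sum_const_zero, add_zero, sum_const,
      nsmul_eq_mul, card_filter_forall_notMem_s14, Nat.cast_pow, ← Nat.cast_sub hL.le]
    linear_combination (1 / (m : ℝ)) ^ n1 * (1 / ((m : ℝ) - #K)) ^ (n1 + n2) * hcancel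
  · exact Fintype.sum_eq_zero _ fun s2 => if_neg fun h => hK ((hvalid s2).1 h).1

theorem fsProb_eq_sum_card (hm : n1 + n2 < m) (P : (Fin n1 → Fin m) → Prop)
    (Q : (Fin n1 ⊕ Fin n2 → Fin m) → Prop) [DecidablePred P] [DecidablePred Q] :
    fsProb n1 n2 m (fun ω => P (fOne ω) ∧ Q (Sum.elim (sOne ω) (fTwo ω))) =
      ∑ f1 : Fin n1 → Fin m, if P f1 then
        (1 / (m : ℝ)) ^ n1 * (1 / ((m : ℝ) - #(univ.image f1))) ^ (n1 + n2) *
          #{u ∈ Fintype.piFinset (fun _ => (univ.image f1)ᶜ) | Q u} else 0 := by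
  unfold fsProb
  simp only [Fintype.sum_prod_type]
  refine sum_congr rfl fun f1 _ => ?_
  set K := univ.image f1
  set C := (1 / (m : ℝ)) ^ n1 * (1 / ((m : ℝ) - #K)) ^ (n1 + n2)
  split_ifs with hP
  · calc _ = ∑ s1 : Fin n1 → Fin m, ∑ f2 : Fin n2 → Fin m,
          if (∀ i, Sum.elim s1 f2 i ∈ Kᶜ) ∧ Q (Sum.elim s1 f2) then C else 0 := by
          refine sum_congr rfl fun s1 _ => sum_congr rfl fun f2 _ => ?_
          by_cases hQ : Q (Sum.elim s1 f2) <;>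
            simp [fOne, sOne, fTwo, hP, hQ, sum_fsWeight_sTwo hm, C, K]
      _ = ∑ u : Fin n1 ⊕ Fin n2 → Fin m, if (∀ i, u i ∈ Kᶜ) ∧ Q u then C else 0 := by
          rw [← Fintype.sum_prod_type']
          exact Fintype.sum_equiv (Equiv.sumArrowEquivProdArrow _ _ _).symm _ _ fun _ => rfl
      _ = _ := by
          rw [Finset.sum_ite, sum_const_zero, add_zero, sum_const, nsmul_eq_mul, mul_comm]
          congr 3
          ext u
          simp [Fintype.mem_piFinset]
  · exact Fintype.sum_eq_zero _ fun s1 => Fintype.sum_eq_zero _ fun f2 =>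
      Fintype.sum_eq_zero _ fun s2 => if_neg fun h => hP h.1

theorem one_div_pow_mul_card_filter_le {c : ℝ} (hc : 0 < c) (hm : 0 < m)
    (hmc : (m : ℝ) / c ≤ m - n1) (f1 : Fin n1 → Fin m) (D : Finset (Fin n1 ⊕ Fin n2))
    (p : Fin n1 ⊕ Fin n2 → Fin n1 ⊕ Fin n2) (hp : ∀ i ∈ D, p i ∉ D) :
    (1 / ((m : ℝ) - #(univ.image f1))) ^ (n1 + n2) *
        #{u ∈ Fintype.piFinset (fun _ => (univ.image f1)ᶜ) | ∀ i ∈ D, u i = u (p i)} ≤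
      (c / m) ^ #D := by
  set K := univ.image f1
  have hKm : #K ≤ m := (card_le_univ K).trans (by simp)
  have hK : (#K : ℝ) ≤ n1 := by exact_mod_cast card_image_le.trans (by simp)
  have hM : (m : ℝ) / c ≤ m - #K := hmc.trans (by linarith)
  have hM0 : (0 : ℝ) < m - #K := (div_pos (by exact_mod_cast hm) hc).trans_le hM
  have hcount : (#{u ∈ Fintype.piFinset (fun _ => Kᶜ) | ∀ i ∈ D, u i = u (p i)} : ℝ) ≤
      ((m : ℝ) - #K) ^ (n1 + n2 - #D) := by
    have h := card_filter_piFinset_le_pow Kᶜ D p hp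
    rw [card_compl, Fintype.card_fin, Fintype.card_sum, Fintype.card_fin, Fintype.card_fin] at h
    rw [← Nat.cast_sub hKm]
    exact_mod_cast h
  calc _ ≤ (1 / ((m : ℝ) - #K)) ^ (n1 + n2) * ((m : ℝ) - #K) ^ (n1 + n2 - #D) := by gcongr
    _ = (1 / ((m : ℝ) - #K)) ^ #D :=
        one_div_pow_mul_pow_sub hM0.ne' ((card_le_univ D).trans (by simp))
    _ ≤ (c / m) ^ #D := by
        refine pow_le_pow_left₀ (by positivity) ?_ _
        calc 1 / ((m : ℝ) - #K) ≤ 1 / (m / c) := one_div_le_one_div_of_le (by positivity) hM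
          _ = c / m := one_div_div _ _

theorem fsProb_le_of_determined {c : ℝ} (hc : 0 < c) (hm : n1 + n2 < m)
    (hmc : (m : ℝ) / c ≤ m - n1) (S : FSSpace n1 n2 m → Prop)
    (D₁ : Finset (Fin n1)) (hD₁ : ∀ i ∈ D₁, ∃ j ∉ D₁, ∀ ω, S ω → fOne ω i = fOne ω j)
    (D₂ : Finset (Fin n1 ⊕ Fin n2))
    (hD₂ : ∀ i ∈ D₂, ∃ j ∉ D₂, ∀ ω, S ω →
      Sum.elim (sOne ω) (fTwo ω) i = Sum.elim (sOne ω) (fTwo ω) j) :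
    fsProb n1 n2 m S ≤ (1 / m) ^ #D₁ * (c / m) ^ #D₂ := by
  choose! p₁ hp₁ using hD₁
  choose! p₂ hp₂ using hD₂
  have hm0 : 0 < m := (Nat.zero_le _).trans_lt hm
  have hcount₁ : (#{f1 : Fin n1 → Fin m | ∀ i ∈ D₁, f1 i = f1 (p₁ i)} : ℝ) ≤
      (m : ℝ) ^ (n1 - #D₁) := by
    have h := card_filter_piFinset_le_pow (univ : Finset (Fin m)) D₁ p₁ fun i hi => (hp₁ i hi).1
    simp only [Fintype.piFinset_univ, card_univ, Fintype.card_fin] at h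
    exact_mod_cast (by convert h : #{f1 : Fin n1 → Fin m | ∀ i ∈ D₁, f1 i = f1 (p₁ i)} ≤ _)
  calc fsProb n1 n2 m S
      ≤ fsProb n1 n2 m (fun ω => (∀ i ∈ D₁, fOne ω i = fOne ω (p₁ i)) ∧
          ∀ i ∈ D₂, Sum.elim (sOne ω) (fTwo ω) i = Sum.elim (sOne ω) (fTwo ω) (p₂ i)) :=
        fsProb_mono fun ω hS => ⟨fun i hi => (hp₁ i hi).2 ω hS, fun i hi => (hp₂ i hi).2 ω hS⟩
    _ ≤ ∑ f1 : Fin n1 → Fin m, if ∀ i ∈ D₁, f1 i = f1 (p₁ i) then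
          (1 / (m : ℝ)) ^ n1 * (c / m) ^ #D₂ else 0 := by
        refine (fsProb_eq_sum_card hm (fun f1 => ∀ i ∈ D₁, f1 i = f1 (p₁ i))
          (fun u => ∀ i ∈ D₂, u i = u (p₂ i))).trans_le (sum_le_sum fun f1 _ => ?_)
        split_ifs
        · rw [mul_assoc]
          exact mul_le_mul_of_nonneg_left (one_div_pow_mul_card_filter_le hc hm0 hmc f1 D₂ p₂
            fun i hi => (hp₂ i hi).1) (by positivity)
        · exact le_rfl
    _ ≤ (m : ℝ) ^ (n1 - #D₁) * ((1 / (m : ℝ)) ^ n1 * (c / m) ^ #D₂) := by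
        rw [Finset.sum_ite, sum_const_zero, add_zero, sum_const, nsmul_eq_mul]
        gcongr
    _ = (1 / m) ^ #D₁ * (c / m) ^ #D₂ := by
        rw [← mul_assoc, mul_comm _ ((1 / (m : ℝ)) ^ n1),
          one_div_pow_mul_pow_sub (by positivity) ((card_le_univ D₁).trans (by simp))]

def tupleSwap (v : Fin n1 × Fin n1 × Fin n2 × Fin n2) : Fin n1 × Fin n1 × Fin n2 × Fin n2 :=
  (v.2.1, v.1, v.2.2.2, v.2.2.1)

theorem ZEvent_tupleSwap (v : Fin n1 × Fin n1 × Fin n2 × Fin n2) (ω : FSSpace n1 n2 m) :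
    ZEvent (tupleSwap v) ω ↔ ZEvent v ω := by
  simp only [ZEvent, tupleSwap, eq_comm (a := fOne ω v.2.1)]
  tauto

section OneCommon

variable {c : ℝ} {x1 x2 a : Fin n1} {y1 y2 y y' : Fin n2}

theorem fsProb_ZEvent_one_common_le (hc : 0 < c) (hm : n1 + n2 < m)
    (hmc : (m : ℝ) / c ≤ m - n1) (hx : x1 ≠ x2) (ha1 : a ≠ x1) (ha2 : a ≠ x2) {k : ℕ}
    (D : Finset (Fin n1 ⊕ Fin n2)) (hcard : #D = k)
    (hD : ∀ i ∈ D, ∃ j ∉ D, ∀ ω : FSSpace n1 n2 m,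
      ZEvent (x1, x2, y1, y2) ω ∧ ZEvent (x1, a, y, y') ω →
        Sum.elim (sOne ω) (fTwo ω) i = Sum.elim (sOne ω) (fTwo ω) j) :
    fsProb n1 n2 m (fun ω => ZEvent (x1, x2, y1, y2) ω ∧ ZEvent (x1, a, y, y') ω) ≤
      (1 / m) ^ 2 * (c / m) ^ k := by
  refine (fsProb_le_of_determined hc hm hmc _ {x2, a} ?_ D hD).trans_eq ?_
  · have hx1 : x1 ∉ ({x2, a} : Finset (Fin n1)) := by simp [hx, ha1.symm]
    simp only [forall_mem_insert, mem_singleton, forall_eq]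
    exact ⟨⟨x1, hx1, fun ω h => h.1.1.symm⟩, ⟨x1, hx1, fun ω h => h.2.1.symm⟩⟩
  · rw [card_pair (Ne.symm ha2), hcard]

theorem fsProb_ZEvent_one_common_le_pow_three (hc : 0 < c) (hm : n1 + n2 < m)
    (hmc : (m : ℝ) / c ≤ m - n1) (hx : x1 ≠ x2) (ha1 : a ≠ x1) (ha2 : a ≠ x2) (hy : y1 ≠ y2) :
    fsProb n1 n2 m (fun ω => ZEvent (x1, x2, y1, y2) ω ∧ ZEvent (x1, a, y, y') ω) ≤
      (1 / m) ^ 2 * (c / m) ^ 3 := by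
  by_cases h1 : y' = y1
  · refine fsProb_ZEvent_one_common_le hc hm hmc hx ha1 ha2 {.inr y1, .inr y2, .inl a}
      (by simp [hy]) ?_
    simp only [forall_mem_insert, mem_singleton, forall_eq]
    refine ⟨⟨.inl x1, ?_, ?_⟩, ⟨.inl x2, ?_, ?_⟩, ⟨.inl x1, ?_, ?_⟩⟩ <;> grind [ZEvent]
  by_cases h2 : y' = y2
  · refine fsProb_ZEvent_one_common_le hc hm hmc hx ha1 ha2 {.inr y1, .inr y2, .inl a}
      (by simp [hy]) ?_
    simp only [forall_mem_insert, mem_singleton, forall_eq]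
    refine ⟨⟨.inl x1, ?_, ?_⟩, ⟨.inl x2, ?_, ?_⟩, ⟨.inl x2, ?_, ?_⟩⟩ <;> grind [ZEvent]
  · refine fsProb_ZEvent_one_common_le hc hm hmc hx ha1 ha2 {.inr y1, .inr y2, .inr y'}
      (by simp [hy, Ne.symm h1, Ne.symm h2]) ?_
    simp only [forall_mem_insert, mem_singleton, forall_eq]
    refine ⟨⟨.inl x1, ?_, ?_⟩, ⟨.inl x2, ?_, ?_⟩, ⟨.inl a, ?_, ?_⟩⟩ <;> grind [ZEvent]

theorem fsProb_ZEvent_one_common_le_pow_four (hc : 0 < c) (hm : n1 + n2 < m)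
    (hmc : (m : ℝ) / c ≤ m - n1) (hx : x1 ≠ x2) (ha1 : a ≠ x1) (ha2 : a ≠ x2) (hy : y1 ≠ y2)
    (hyy' : y ≠ y') (hy1 : y ≠ y1) :
    fsProb n1 n2 m (fun ω => ZEvent (x1, x2, y1, y2) ω ∧ ZEvent (x1, a, y, y') ω) ≤
      (1 / m) ^ 2 * (c / m) ^ 4 := by
  by_cases h2 : y = y2
  · by_cases h1' : y' = y1
    · refine fsProb_ZEvent_one_common_le hc hm hmc hx ha1 ha2 {.inr y1, .inr y2, .inl x2, .inl a}
        (by simp [hy, Ne.symm ha2]) ?_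
      simp only [forall_mem_insert, mem_singleton, forall_eq]
      refine ⟨⟨.inl x1, ?_, ?_⟩, ⟨.inl x1, ?_, ?_⟩, ⟨.inl x1, ?_, ?_⟩, ⟨.inl x1, ?_, ?_⟩⟩ <;>
        grind [ZEvent]
    have h2' : y' ≠ y2 := h2 ▸ hyy'.symm
    refine fsProb_ZEvent_one_common_le hc hm hmc hx ha1 ha2 {.inr y1, .inr y2, .inr y', .inl x1}
      (by simp [hy, Ne.symm h1', Ne.symm h2']) ?_
    simp only [forall_mem_insert, mem_singleton, forall_eq]
    refine ⟨⟨.inl x2, ?_, ?_⟩, ⟨.inl x2, ?_, ?_⟩, ⟨.inl a, ?_, ?_⟩, ⟨.inl x2, ?_, ?_⟩⟩ <;>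
      grind [ZEvent]
  by_cases h1' : y' = y1
  · refine fsProb_ZEvent_one_common_le hc hm hmc hx ha1 ha2 {.inr y1, .inr y2, .inr y, .inl a}
      (by simp [hy, Ne.symm hy1, Ne.symm h2]) ?_
    simp only [forall_mem_insert, mem_singleton, forall_eq]
    refine ⟨⟨.inl x1, ?_, ?_⟩, ⟨.inl x2, ?_, ?_⟩, ⟨.inl x1, ?_, ?_⟩, ⟨.inl x1, ?_, ?_⟩⟩ <;>
      grind [ZEvent]
  by_cases h2' : y' = y2
  · refine fsProb_ZEvent_one_common_le hc hm hmc hx ha1 ha2 {.inr y1, .inr y2, .inr y, .inl a}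
      (by simp [hy, Ne.symm hy1, Ne.symm h2]) ?_
    simp only [forall_mem_insert, mem_singleton, forall_eq]
    refine ⟨⟨.inl x1, ?_, ?_⟩, ⟨.inl x2, ?_, ?_⟩, ⟨.inl x1, ?_, ?_⟩, ⟨.inl x2, ?_, ?_⟩⟩ <;>
      grind [ZEvent]
  · refine fsProb_ZEvent_one_common_le hc hm hmc hx ha1 ha2 {.inr y1, .inr y2, .inr y, .inr y'}
      (by simp [hy, hyy', Ne.symm hy1, Ne.symm h2, Ne.symm h1', Ne.symm h2']) ?_
    simp only [forall_mem_insert, mem_singleton, forall_eq]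
    refine ⟨⟨.inl x1, ?_, ?_⟩, ⟨.inl x2, ?_, ?_⟩, ⟨.inl x1, ?_, ?_⟩, ⟨.inl a, ?_, ?_⟩⟩ <;>
      grind [ZEvent]

end OneCommon

theorem card_filter_offDiag_fst_eq_le (y1 : Fin n2) :
    #{q ∈ (univ : Finset (Fin n2)).offDiag | q.1 = y1} ≤ n2 := by
  calc _ ≤ #(({y1} : Finset (Fin n2)) ×ˢ univ) := card_le_card fun q => by
          simp only [mem_filter, mem_product, mem_singleton, mem_univ, and_true]
          exact And.right
    _ = n2 := by simp

theorem sum_fsProb_one_common_le {c : ℝ} (hc : 0 < c) (hm : n1 + n2 < m)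
    (hmc : (m : ℝ) / c ≤ m - n1) {x1 x2 : Fin n1} {y1 y2 : Fin n2} (hx : x1 ≠ x2)
    (hy : y1 ≠ y2) :
    ∑ z ∈ ({x1, x2}ᶜ ×ˢ (univ : Finset (Fin n2)).offDiag),
        fsProb n1 n2 m (fun ω => ZEvent (x1, x2, y1, y2) ω ∧ ZEvent (x1, z.1, z.2.1, z.2.2) ω) ≤
      n1 * (n2 * ((1 / m) ^ 2 * (c / m) ^ 3) + n2 ^ 2 * ((1 / m) ^ 2 * (c / m) ^ 4)) := by
  rw [sum_product]
  refine (sum_le_card_nsmul _ _ (n2 * ((1 / (m : ℝ)) ^ 2 * (c / m) ^ 3) +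
    n2 ^ 2 * ((1 / (m : ℝ)) ^ 2 * (c / m) ^ 4)) fun a ha => ?_).trans ?_
  · have ha' : a ≠ x1 ∧ a ≠ x2 := by simpa [not_or] using ha
    rw [← sum_filter_add_sum_filter_not _ fun q => q.1 = y1]
    gcongr
    · refine (sum_le_card_nsmul _ _ _ fun q _ =>
        fsProb_ZEvent_one_common_le_pow_three hc hm hmc hx ha'.1 ha'.2 hy).trans ?_
      rw [nsmul_eq_mul]
      gcongr
      exact_mod_cast card_filter_offDiag_fst_eq_le y1
    · refine (sum_le_card_nsmul _ _ ((1 / (m : ℝ)) ^ 2 * (c / m) ^ 4) fun q hq => ?_).trans ?_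
      · simp only [mem_filter, mem_offDiag] at hq
        exact fsProb_ZEvent_one_common_le_pow_four hc hm hmc hx ha'.1 ha'.2 hy hq.1.2.2 hq.2
      rw [nsmul_eq_mul]
      gcongr
      exact_mod_cast (card_filter_le _ _).trans (card_le_univ _) |>.trans (by simp [sq])
  · rw [nsmul_eq_mul]
    gcongr
    exact_mod_cast (card_le_univ _).trans (by simp)

theorem of_mem_Tcommon_one {v w : Fin n1 × Fin n1 × Fin n2 × Fin n2}
    (hw : w ∈ Tcommon n1 n2 1 v) :
    w.1 < w.2.1 ∧ w.2.2.1 ≠ w.2.2.2 ∧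
      (w.1 ∈ ({v.1, v.2.1} : Finset (Fin n1)) ↔ w.2.1 ∉ ({v.1, v.2.1} : Finset (Fin n1))) := by
  simp only [Tcommon, Ttup, mem_filter, mem_univ, true_and] at hw
  exact ⟨hw.1.1, hw.1.2, mem_iff_notMem_of_card_inter_pair_eq_one hw.1.1.ne hw.2.2⟩

def sharedFirst (v w : Fin n1 × Fin n1 × Fin n2 × Fin n2) : Fin n1 × Fin n1 × Fin n2 × Fin n2 :=
  if w.1 ∈ ({v.1, v.2.1} : Finset (Fin n1)) then w else tupleSwap w

theorem ZEvent_sharedFirst (v w : Fin n1 × Fin n1 × Fin n2 × Fin n2) (ω : FSSpace n1 n2 m) :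
    ZEvent (sharedFirst v w) ω ↔ ZEvent w ω := by
  unfold sharedFirst
  split_ifs
  exacts [Iff.rfl, ZEvent_tupleSwap w ω]

theorem injOn_sharedFirst (v : Fin n1 × Fin n1 × Fin n2 × Fin n2) :
    Set.InjOn (sharedFirst v) (Tcommon n1 n2 1 v) := by
  rintro ⟨w1, w2, w3, w4⟩ hw ⟨w1', w2', w3', w4'⟩ hw' h
  have hw := (of_mem_Tcommon_one hw).1
  have hw' := (of_mem_Tcommon_one hw').1
  simp only [sharedFirst, tupleSwap] at h hw hw' ⊢
  split_ifs at h <;> simp only [Prod.mk.injEq] at h ⊢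
  · exact h
  · exact absurd (hw.trans_eq h.2.1 |>.trans hw') (h.1 ▸ lt_irrefl w1)
  · exact absurd (hw'.trans_eq h.2.1.symm |>.trans hw) (h.1 ▸ lt_irrefl w1')
  · exact ⟨h.2.1, h.1, h.2.2.2, h.2.2.1⟩

theorem sharedFirst_mem_product {v w : Fin n1 × Fin n1 × Fin n2 × Fin n2}
    (hw : w ∈ Tcommon n1 n2 1 v) :
    sharedFirst v w ∈ ({v.1, v.2.1} : Finset (Fin n1)) ×ˢ
      (({v.1, v.2.1} : Finset (Fin n1))ᶜ ×ˢ (univ : Finset (Fin n2)).offDiag) := by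
  obtain ⟨-, hw34, hshared⟩ := of_mem_Tcommon_one hw
  unfold sharedFirst tupleSwap
  split_ifs with h1 <;> simp only [mem_product, mem_offDiag, mem_compl, mem_univ, true_and]
  · exact ⟨h1, hshared.1 h1, hw34⟩
  · exact ⟨not_not.1 (mt hshared.2 h1), h1, hw34.symm⟩

theorem sum_Tcommon_one_le {c : ℝ} (hc : 0 < c) (hm : n1 + n2 < m)
    (hmc : (m : ℝ) / c ≤ m - n1) {v : Fin n1 × Fin n1 × Fin n2 × Fin n2}
    (hv : v ∈ Ttup n1 n2) :
    ∑ w ∈ Tcommon n1 n2 1 v, fsExp n1 n2 m (fun ω => Zind v ω * Zind w ω) ≤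
      2 * (n1 * (n2 * ((1 / m) ^ 2 * (c / m) ^ 3) +
        n2 ^ 2 * ((1 / m) ^ 2 * (c / m) ^ 4))) := by
  let g : Fin n1 × Fin n1 × Fin n2 × Fin n2 → ℝ := fun z =>
    fsProb n1 n2 m (fun ω => ZEvent v ω ∧ ZEvent z ω)
  calc _ = ∑ w ∈ Tcommon n1 n2 1 v, g (sharedFirst v w) :=
        sum_congr rfl fun w _ => by simp only [fsExp_Zind_mul_Zind, g, ZEvent_sharedFirst]
    _ = ∑ z ∈ (Tcommon n1 n2 1 v).image (sharedFirst v), g z :=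
        (sum_image (injOn_sharedFirst v)).symm
    _ ≤ ∑ z ∈ ({v.1, v.2.1} : Finset (Fin n1)) ×ˢ
          (({v.1, v.2.1} : Finset (Fin n1))ᶜ ×ˢ (univ : Finset (Fin n2)).offDiag), g z :=
        sum_le_sum_of_subset_of_nonneg (image_subset_iff.2 fun _ => sharedFirst_mem_product)
          fun _ _ _ => fsProb_nonneg _
    _ ≤ _ := by
        obtain ⟨x1, x2, y1, y2⟩ := v
        obtain ⟨hx, hy⟩ : x1 < x2 ∧ y1 ≠ y2 := by simpa [Ttup] using hv
        have hswap : ∀ ω : FSSpace n1 n2 m, ZEvent (x1, x2, y1, y2) ω ↔ ZEvent (x2, x1, y2, y1) ω :=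
          fun ω => (ZEvent_tupleSwap _ ω).symm
        rw [sum_product, sum_pair hx.ne, two_mul]
        refine add_le_add (sum_fsProb_one_common_le hc hm hmc hx.ne hy) ?_
        simp only [g, hswap, pair_comm x1 x2]
        exact sum_fsProb_one_common_le hc hm hmc hx.ne' hy.symm

end Model

theorem one_common_sum_bound_general (δ : ℝ)
    (c : ℝ) (hc : 1 < c) (n n1 n2 m : ℕ)
    (hn1 : (n1 : ℝ) = δ * n) (hn2 : (n2 : ℝ) = (1 - δ) * n)
    (hm : n < m) (hmc : (m : ℝ) / c ≤ (m : ℝ) - (n : ℝ)) :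
    ∑ v ∈ Ttup n1 n2, ∑ w ∈ Tcommon n1 n2 1 v,
        fsExp n1 n2 m (fun ω => Zind v ω * Zind w ω) ≤
      (4 * c ^ 4 * δ * (1 - δ) ^ 2 * (n : ℝ) ^ 3 / (m : ℝ) ^ 6 +
        4 * c ^ 3 * δ * (1 - δ) * (n : ℝ) ^ 2 / (m : ℝ) ^ 5 +
        4 * c ^ 3 * δ * (n : ℝ) / (m : ℝ) ^ 5) * ((Ttup n1 n2).card : ℝ) := by
  have hn : n1 + n2 = n := by exact_mod_cast (by rw [hn1, hn2]; ring : (n1 + n2 : ℝ) = n)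
  have hc0 : 0 < c := one_pos.trans hc
  have hmc' : (m : ℝ) / c ≤ m - n1 := by
    have : (n1 : ℝ) ≤ n := by exact_mod_cast hn ▸ Nat.le_add_right n1 n2
    linarith
  set bound : ℝ := n1 * (n2 * ((1 / m) ^ 2 * (c / m) ^ 3) +
    n2 ^ 2 * ((1 / m) ^ 2 * (c / m) ^ 4))
  have hbound : 4 * c ^ 4 * δ * (1 - δ) ^ 2 * (n : ℝ) ^ 3 / (m : ℝ) ^ 6 +
      4 * c ^ 3 * δ * (1 - δ) * (n : ℝ) ^ 2 / (m : ℝ) ^ 5 + 4 * c ^ 3 * δ * (n : ℝ) / (m : ℝ) ^ 5 =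
      4 * bound + 4 * n1 * ((1 / m) ^ 2 * (c / m) ^ 3) := by
    simp only [bound, hn1, hn2]
    ring
  calc _ ≤ ∑ _v ∈ Ttup n1 n2, 2 * bound :=
        sum_le_sum fun v hv => sum_Tcommon_one_le hc0 (hn ▸ hm) hmc' hv
    _ = 2 * bound * #(Ttup n1 n2) := by rw [sum_const, nsmul_eq_mul, mul_comm]
    _ ≤ _ := by
        rw [hbound]
        gcongr
        linarith [show 0 ≤ bound by positivity,
          show (0 : ℝ) ≤ 4 * n1 * ((1 / m) ^ 2 * (c / m) ^ 3) by positivity]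

/-- **Inequality (7).** In the random fs-relation graph model with
`n1 = δn`, `n2 = (1-δ)n` and `m - n ≥ m/c`, the sum over `v ∈ T` and `w ∈ T_1(v)` of
`E[Z_v Z_w]` is at most `(4c⁴δ(1-δ)²n³/m⁶ + 4c³δ(1-δ)n²/m⁵ + 4c³δn/m⁵)·|T|`. -/
theorem one_common_sum_bound (δ : ℝ) (hδ0 : 0 < δ) (hδ1 : δ < 1)
    (c : ℝ) (hc : 1 < c) (n n1 n2 m : ℕ)
    (hn1 : (n1 : ℝ) = δ * n) (hn2 : (n2 : ℝ) = (1 - δ) * n)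
    (hm : n < m) (hmc : (m : ℝ) / c ≤ (m : ℝ) - (n : ℝ)) :
    ∑ v ∈ Ttup n1 n2, ∑ w ∈ Tcommon n1 n2 1 v,
        fsExp n1 n2 m (fun ω => Zind v ω * Zind w ω) ≤
      (4 * c ^ 4 * δ * (1 - δ) ^ 2 * (n : ℝ) ^ 3 / (m : ℝ) ^ 6 +
        4 * c ^ 3 * δ * (1 - δ) * (n : ℝ) ^ 2 / (m : ℝ) ^ 5 +
        4 * c ^ 3 * δ * (n : ℝ) / (m : ℝ) ^ 5) * ((Ttup n1 n2).card : ℝ) :=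
  one_common_sum_bound_general δ c hc n n1 n2 m hn1 hn2 hm hmc
end
end
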